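/- arXiv:1611.09980 — 2 statements merged into one kernel-verified Lean document; each statement's English description precedes it below -/
import Mathlib

section
/- Let g: (0,∞) → [0,∞) be a probability density whose Laplace transform satisfies ∫_0^∞ e^{-λt} g(t) dt = (1+Ψ(λ))^{-(r+1)} for all λ>0, where Ψ(λ) = ∫_0^1 (1-e^{-λx})αx^{-α-1}dx, r∈ℕ, 0<α<1. Then r·α ∫_0^1 x^{-α} (∫_0^∞ g(t)/(x+t) dt) dx = 1. -/
/-!
Since `1 / (x + t) = ∫_0^∞ e^{-λ (x + t)} dλ`, Tonelli's theorem turns the double integral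
into `∫_0^∞ L(λ) D(λ) dλ`, where `L` is the Laplace transform of `g` and
`D(λ) = ∫_0^1 x^{-α} e^{-λx} dx`. Now `α D = Ψ'` and `L = (1 + Ψ)^{-(r+1)}`, so
`α L D = -(1/r) d/dλ (1 + Ψ)^{-r}`, which integrates to `1/r` because `Ψ(0) = 0` and
`Ψ(λ) → ∞`; the latter follows from `L(λ) → 0`.
-/

open MeasureTheory Set Filter Topology Real

lemma integrableOn_rpow_neg_Ioo_zero_one {α : ℝ} (hα : α < 1) :
    IntegrableOn (fun x : ℝ => x ^ (-α)) (Ioo 0 1) :=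
  (intervalIntegral.integrableOn_Ioo_rpow_iff one_pos).2 (by linarith)

/-- The paper's `Ψ`: the Laplace exponent of an `α`-stable subordinator with jumps truncated
at `1`. -/
noncomputable def laplaceExponent (α l : ℝ) : ℝ :=
  ∫ x in Ioo (0:ℝ) 1, (1 - exp (-l * x)) * (α * x ^ (-α - 1))

section LaplaceExponent

variable {α l : ℝ}

lemma laplaceExponent_zero (α : ℝ) : laplaceExponent α 0 = 0 := by
  simp [laplaceExponent]

lemma laplaceExponent_integrand_nonneg (hα : 0 ≤ α) (hl : 0 ≤ l) {x : ℝ} (hx : 0 < x) :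
    0 ≤ (1 - exp (-l * x)) * (α * x ^ (-α - 1)) := by
  have : exp (-l * x) ≤ 1 := exp_le_one_iff.2 (by nlinarith)
  have := rpow_pos_of_pos hx (-α - 1)
  exact mul_nonneg (by linarith) (by positivity)

lemma laplaceExponent_integrand_le (hα : 0 ≤ α) {x : ℝ} (hx : 0 < x) :
    (1 - exp (-l * x)) * (α * x ^ (-α - 1)) ≤ l * (α * x ^ (-α)) := calc
  _ ≤ (l * x) * (α * x ^ (-α - 1)) := by
      have := rpow_pos_of_pos hx (-α - 1)
      gcongr
      have := one_sub_le_exp_neg (l * x)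
      rw [← neg_mul] at this
      linarith
  _ = l * (α * x ^ (-α)) := by
      rw [rpow_sub_one hx.ne']
      field_simp

lemma laplaceExponent_nonneg (hα : 0 ≤ α) (hl : 0 ≤ l) : 0 ≤ laplaceExponent α l :=
  setIntegral_nonneg measurableSet_Ioo fun _ hx => laplaceExponent_integrand_nonneg hα hl hx.1

lemma laplaceExponent_le_mul (hα : 0 ≤ α) (hα1 : α < 1) (hl : 0 ≤ l) :
    laplaceExponent α l ≤ l * (α * ∫ x in Ioo (0:ℝ) 1, x ^ (-α)) := by
  rw [← integral_const_mul, ← integral_const_mul]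
  refine integral_mono_of_nonneg ?_
    ((integrableOn_rpow_neg_Ioo_zero_one hα1).const_mul α |>.const_mul l) ?_ <;>
  filter_upwards [ae_restrict_mem measurableSet_Ioo] with x hx
  exacts [laplaceExponent_integrand_nonneg hα hl hx.1, laplaceExponent_integrand_le hα hx.1]

lemma continuousWithinAt_laplaceExponent_zero (hα : 0 ≤ α) (hα1 : α < 1) :
    ContinuousWithinAt (laplaceExponent α) (Ici 0) 0 := by
  have hlin : Tendsto (fun l : ℝ => l * (α * ∫ x in Ioo (0:ℝ) 1, x ^ (-α)))
      (𝓝[Ici 0] 0) (𝓝 0) :=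
    ((continuous_mul_const _).tendsto' 0 0 (zero_mul _)).mono_left nhdsWithin_le_nhds
  rw [ContinuousWithinAt, laplaceExponent_zero]
  exact squeeze_zero' (eventually_nhdsWithin_of_forall fun l hl => laplaceExponent_nonneg hα hl)
    (eventually_nhdsWithin_of_forall fun l hl => laplaceExponent_le_mul hα hα1 hl) hlin

lemma hasDerivAt_laplaceExponent (hα : 0 ≤ α) (hα1 : α < 1) (hl : 0 < l) :
    HasDerivAt (laplaceExponent α) (α * ∫ x in Ioo (0:ℝ) 1, exp (-l * x) * x ^ (-α)) l := by
  have hbound := (integrableOn_rpow_neg_Ioo_zero_one hα1).const_mul α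
  rw [← integral_const_mul]
  refine (hasDerivAt_integral_of_dominated_loc_of_deriv_le (Ioi_mem_nhds hl)
    (F' := fun y x => α * (exp (-y * x) * x ^ (-α))) (bound := fun x => α * x ^ (-α))
    (Eventually.of_forall fun _ => by fun_prop) ?_ (by fun_prop) ?_ hbound ?_).2
  · refine Integrable.mono' (hbound.const_mul l) (by fun_prop) ?_
    filter_upwards [ae_restrict_mem measurableSet_Ioo] with x hx
    rw [norm_of_nonneg (laplaceExponent_integrand_nonneg hα hl.le hx.1)]
    exact laplaceExponent_integrand_le hα hx.1
  · filter_upwards [ae_restrict_mem measurableSet_Ioo] with x hx y hy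
    have hexp : exp (-y * x) ≤ 1 := exp_le_one_iff.2 (by nlinarith [hx.1, hy.out])
    have := rpow_pos_of_pos hx.1 (-α)
    rw [norm_of_nonneg (by positivity)]
    gcongr
    exact mul_le_of_le_one_left this.le hexp
  · filter_upwards [ae_restrict_mem measurableSet_Ioo] with x hx y _
    refine ((((hasDerivAt_id y).neg.mul_const x).exp.const_sub 1).mul_const
      (α * x ^ (-α - 1))).congr_deriv ?_
    have hx0 : x ≠ 0 := hx.1.ne'
    rw [rpow_sub_one hx0, Pi.neg_apply, id]
    field_simp

end LaplaceExponent

lemma integral_Ioi_one_add_rpow_neg_mul_deriv {Ψ Ψ' : ℝ → ℝ} {s : ℝ} (hs : 0 < s)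
    (hΨ0 : Ψ 0 = 0) (hcont : ContinuousWithinAt Ψ (Ici 0) 0) (hΨ : ∀ l ∈ Ioi 0, 0 ≤ Ψ l)
    (hderiv : ∀ l ∈ Ioi 0, HasDerivAt Ψ (Ψ' l) l) (hΨ' : ∀ l ∈ Ioi 0, 0 ≤ Ψ' l)
    (htop : Tendsto Ψ atTop atTop) :
    ∫ l in Ioi 0, (1 + Ψ l) ^ (-(s + 1)) * Ψ' l = 1 / s := by
  have hpos : ∀ l ∈ Ioi (0:ℝ), 0 < 1 + Ψ l := fun l hl => by linarith [hΨ l hl]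
  set F : ℝ → ℝ := fun l => -(1 + Ψ l) ^ (-s) / s
  have hF_deriv : ∀ l ∈ Ioi (0:ℝ), HasDerivAt F ((1 + Ψ l) ^ (-(s + 1)) * Ψ' l) l := by
    intro l hl
    refine ((((hderiv l hl).const_add 1).rpow_const (Or.inl (hpos l hl).ne')).neg.div_const s
      ).congr_deriv ?_
    rw [show -s - 1 = -(s + 1) by ring]
    field_simp
  have hF_cont : ContinuousWithinAt F (Ici 0) 0 :=
    ((hcont.const_add 1).rpow_const (Or.inl (by simp [hΨ0]))).neg.div_const s
  have hF_top : Tendsto F atTop (𝓝 0) := by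
    simpa using ((tendsto_rpow_neg_atTop hs).comp
      (tendsto_atTop_add_const_left _ 1 htop)).neg.div_const s
  rw [integral_Ioi_of_hasDerivAt_of_nonneg hF_cont hF_deriv
    (fun l hl => mul_nonneg (rpow_nonneg (hpos l hl).le _) (hΨ' l hl)) hF_top]
  simp [F, hΨ0, neg_div]

lemma tendsto_atTop_of_rpow_neg_tendsto_zero {ι : Type*} {L : Filter ι} {f : ι → ℝ} {p : ℝ}
    (hp : 0 < p) (hf : ∀ᶠ i in L, 0 < f i) (h : Tendsto (fun i => f i ^ (-p)) L (𝓝 0)) :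
    Tendsto f L atTop := by
  have h' : Tendsto (fun i => f i ^ (-p)) L (𝓝[>] 0) :=
    tendsto_nhdsWithin_iff.2 ⟨h, hf.mono fun i hi => rpow_pos_of_pos hi _⟩
  refine ((tendsto_rpow_neg_nhdsGT_zero (neg_lt_zero.2 (inv_pos.2 hp))).comp h').congr' ?_
  filter_upwards [hf] with i hi
  simp [← rpow_mul hi.le, hp.ne']

lemma tendsto_integral_exp_neg_mul_atTop {g : ℝ → ℝ} (hg : IntegrableOn g (Ioi 0)) :
    Tendsto (fun l => ∫ t in Ioi 0, exp (-l * t) * g t) atTop (𝓝 0) := by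
  have := tendsto_integral_filter_of_dominated_convergence (fun t => ‖g t‖)
    (F := fun l t => exp (-l * t) * g t) (f := fun _ => 0) (l := atTop)
    (μ := volume.restrict (Ioi 0)) ?_ ?_ hg.norm ?_
  · simpa using this
  · exact Eventually.of_forall fun l =>
      (continuous_exp.comp (continuous_const_mul (-l))).aestronglyMeasurable.mul hg.1
  · filter_upwards [eventually_ge_atTop 0] with l hl
    filter_upwards [ae_restrict_mem measurableSet_Ioi] with t ht
    rw [norm_mul, norm_of_nonneg (exp_nonneg _)]
    exact mul_le_of_le_one_left (norm_nonneg _) (exp_le_one_iff.2 (by nlinarith [ht.out]))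
  · filter_upwards [ae_restrict_mem measurableSet_Ioi] with t ht
    have : Tendsto (fun l : ℝ => -l * t) atTop atBot := by
      simpa using tendsto_neg_atTop_atBot.atBot_mul_const ht.out
    simpa using (tendsto_exp_atBot.comp this).mul_const (g t)

lemma lintegral_exp_neg_mul_Ioi {c : ℝ} (hc : 0 < c) :
    ∫⁻ l in Ioi 0, ENNReal.ofReal (exp (-l * c)) = ENNReal.ofReal c⁻¹ := by
  simp_rw [neg_mul_comm _ c, mul_comm _ (-c)]
  rw [← ofReal_integral_eq_lintegral_ofReal (integrableOn_exp_mul_Ioi (neg_lt_zero.2 hc) 0)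
    (Eventually.of_forall fun _ => exp_nonneg _), integral_exp_mul_Ioi (neg_lt_zero.2 hc)]
  simp [neg_div, div_neg]

section Tonelli

variable {s u : Set ℝ}

lemma lintegral_laplace_mul_laplace {F G : ℝ → ENNReal} (hF : Measurable F) (hG : Measurable G)
    (hs : MeasurableSet s) (hu : MeasurableSet u) (hs0 : s ⊆ Ioi 0) (hu0 : u ⊆ Ici 0) :
    ∫⁻ l in Ioi 0, (∫⁻ t in u, ENNReal.ofReal (exp (-l * t)) * G t) *
        ∫⁻ x in s, ENNReal.ofReal (exp (-l * x)) * F x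
      = ∫⁻ x in s, ∫⁻ t in u, F x * G t * ENNReal.ofReal (x + t)⁻¹ := by
  have hmeas : Measurable fun p : (ℝ × ℝ) × ℝ =>
      F p.1.2 * G p.2 * ENNReal.ofReal (exp (-p.1.1 * (p.1.2 + p.2))) := by fun_prop
  calc _ = ∫⁻ l in Ioi 0, ∫⁻ x in s, ∫⁻ t in u,
        F x * G t * ENNReal.ofReal (exp (-l * (x + t))) := by
        refine lintegral_congr fun l => ?_
        rw [mul_comm, ← lintegral_lintegral_mul (by fun_prop) (by fun_prop)]
        refine lintegral_congr fun x => lintegral_congr fun t => ?_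
        rw [mul_add, exp_add, ENNReal.ofReal_mul (exp_nonneg _)]
        ring
    _ = ∫⁻ x in s, ∫⁻ l in Ioi 0, ∫⁻ t in u,
        F x * G t * ENNReal.ofReal (exp (-l * (x + t))) :=
        lintegral_lintegral_swap hmeas.lintegral_prod_right'.aemeasurable
    _ = ∫⁻ x in s, ∫⁻ t in u, ∫⁻ l in Ioi 0,
        F x * G t * ENNReal.ofReal (exp (-l * (x + t))) :=
        lintegral_congr fun x => lintegral_lintegral_swap (by fun_prop)
    _ = _ := by
        refine setLIntegral_congr_fun hs fun x hx => setLIntegral_congr_fun hu fun t ht => ?_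
        rw [lintegral_const_mul _ (by fun_prop),
          lintegral_exp_neg_mul_Ioi (add_pos_of_pos_of_nonneg (hs0 hx) (hu0 ht))]

lemma ofReal_integral_exp_neg_mul {f : ℝ → ℝ} (hs : MeasurableSet s) (hs0 : s ⊆ Ici 0)
    (hf : IntegrableOn f s) (hf0 : ∀ x ∈ s, 0 ≤ f x) {l : ℝ} (hl : 0 ≤ l) :
    ENNReal.ofReal (∫ x in s, exp (-l * x) * f x)
      = ∫⁻ x in s, ENNReal.ofReal (exp (-l * x)) * ENNReal.ofReal (f x) := by
  rw [ofReal_integral_eq_lintegral_ofReal]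
  · exact setLIntegral_congr_fun hs fun x _ => ENNReal.ofReal_mul (exp_nonneg _)
  · refine Integrable.mono hf
      ((continuous_exp.comp (continuous_const_mul _)).aestronglyMeasurable.mul hf.1) ?_
    filter_upwards [ae_restrict_mem hs] with x hx
    rw [norm_mul, Real.norm_of_nonneg (exp_nonneg _)]
    exact mul_le_of_le_one_left (norm_nonneg _)
      (exp_le_one_iff.2 (by nlinarith [(hs0 hx).out]))
  · filter_upwards [ae_restrict_mem hs] with x hx
    exact mul_nonneg (exp_nonneg _) (hf0 x hx)

lemma integrableOn_div_const_add {g : ℝ → ℝ} (hg : Measurable g) (hgu : IntegrableOn g u)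
    (hu : MeasurableSet u) (hu0 : u ⊆ Ici 0) {x : ℝ} (hx : 0 < x) :
    IntegrableOn (fun t => g t / (x + t)) u := by
  refine Integrable.mono (hgu.const_mul x⁻¹) (by fun_prop : Measurable _).aestronglyMeasurable ?_
  filter_upwards [ae_restrict_mem hu] with t ht
  have hxt : x ≤ x + t := le_add_of_nonneg_right (hu0 ht)
  rw [norm_div, norm_mul, norm_inv, norm_of_nonneg (hx.trans_le hxt).le, norm_of_nonneg hx.le,
    inv_mul_eq_div]
  exact div_le_div_of_nonneg_left (norm_nonneg _) hx hxt

lemma integral_laplace_mul_laplace {f g : ℝ → ℝ} (hf : Measurable f) (hg : Measurable g)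
    (hs : MeasurableSet s) (hu : MeasurableSet u) (hs0 : s ⊆ Ioi 0) (hu0 : u ⊆ Ici 0)
    (hfs : IntegrableOn f s) (hgu : IntegrableOn g u)
    (hf0 : ∀ x ∈ s, 0 ≤ f x) (hg0 : ∀ t ∈ u, 0 ≤ g t) :
    ∫ l in Ioi 0, (∫ t in u, exp (-l * t) * g t) * ∫ x in s, exp (-l * x) * f x
      = ∫ x in s, f x * ∫ t in u, g t / (x + t) := by
  have hlaplace_nonneg : ∀ {h : ℝ → ℝ} {v : Set ℝ}, MeasurableSet v →
      (∀ x ∈ v, 0 ≤ h x) → ∀ l, 0 ≤ ∫ x in v, exp (-l * x) * h x := fun hv h0 l =>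
    setIntegral_nonneg hv fun x hx => mul_nonneg (exp_nonneg _) (h0 x hx)
  have hresolvent_nonneg : ∀ x ∈ s, ∀ t ∈ u, 0 ≤ g t / (x + t) := fun x hx t ht =>
    div_nonneg (hg0 t ht) (add_pos_of_pos_of_nonneg (hs0 hx) (hu0 ht)).le
  have hmeas_integral : ∀ {F : ℝ → ℝ → ℝ}, Measurable (Function.uncurry F) →
      ∀ v : Set ℝ, StronglyMeasurable fun y => ∫ t in v, F y t :=
    fun hF v => hF.stronglyMeasurable.integral_prod_right'
  have hLHS_nonneg : 0 ≤ᵐ[volume.restrict (Ioi 0)]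
      fun l => (∫ t in u, exp (-l * t) * g t) * ∫ x in s, exp (-l * x) * f x :=
    Eventually.of_forall fun l => mul_nonneg (hlaplace_nonneg hu hg0 l) (hlaplace_nonneg hs hf0 l)
  have hRHS_nonneg : 0 ≤ᵐ[volume.restrict s] fun x => f x * ∫ t in u, g t / (x + t) := by
    filter_upwards [ae_restrict_mem hs] with x hx
    exact mul_nonneg (hf0 x hx) (setIntegral_nonneg hu (hresolvent_nonneg x hx))
  rw [integral_eq_lintegral_of_nonneg_ae hLHS_nonneg ((hmeas_integral (by fun_prop) u).mul
      (hmeas_integral (by fun_prop) s)).aestronglyMeasurable,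
    integral_eq_lintegral_of_nonneg_ae hRHS_nonneg
      (hf.stronglyMeasurable.mul (hmeas_integral (by fun_prop) u)).aestronglyMeasurable]
  congr 1
  calc _ = ∫⁻ l in Ioi 0,
        (∫⁻ t in u, ENNReal.ofReal (exp (-l * t)) * ENNReal.ofReal (g t)) *
          ∫⁻ x in s, ENNReal.ofReal (exp (-l * x)) * ENNReal.ofReal (f x) := by
        refine setLIntegral_congr_fun measurableSet_Ioi fun l hl => ?_
        rw [ENNReal.ofReal_mul (hlaplace_nonneg hu hg0 l),
          ofReal_integral_exp_neg_mul hu hu0 hgu hg0 hl.out.le,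
          ofReal_integral_exp_neg_mul hs (hs0.trans Ioi_subset_Ici_self) hfs hf0 hl.out.le]
    _ = ∫⁻ x in s, ∫⁻ t in u,
        ENNReal.ofReal (f x) * ENNReal.ofReal (g t) * ENNReal.ofReal (x + t)⁻¹ :=
        lintegral_laplace_mul_laplace (by fun_prop) (by fun_prop) hs hu hs0 hu0
    _ = _ := by
        refine setLIntegral_congr_fun hs fun x hx => ?_
        rw [ENNReal.ofReal_mul (hf0 x hx), ofReal_integral_eq_lintegral_ofReal
          (integrableOn_div_const_add hg hgu hu hu0 (hs0 hx))
          (ae_restrict_of_forall_mem hu (hresolvent_nonneg x hx)),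
          ← lintegral_const_mul _ (by fun_prop)]
        refine setLIntegral_congr_fun hu fun t ht => ?_
        rw [mul_assoc, ← ENNReal.ofReal_mul (hg0 t ht), div_eq_mul_inv]

end Tonelli

/-- If g is a probability density on (0,∞) with Laplace transform (1+Ψ(λ))^{-(r+1)}, then
rα ∫_0^1 x^{-α} (∫_0^∞ g(t)/(x+t) dt) dx = 1. -/
theorem stmt_10 (α : ℝ) (hα : 0 < α) (hα1 : α < 1) (r : ℕ) (hr : 0 < r)
    (g : ℝ → ℝ) (hgpos : ∀ t ∈ Ioi (0:ℝ), 0 ≤ g t) (hgmeas : Measurable g)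
    (hgprob : ∫ t in Ioi (0:ℝ), g t = 1)
    (hLap : ∀ l > (0:ℝ),
      ∫ t in Ioi (0:ℝ), Real.exp (-l * t) * g t
        = (1 + ∫ x in Ioo (0:ℝ) 1, (1 - Real.exp (-l * x)) * (α * x ^ (-α - 1)))
            ^ (-(r + 1 : ℝ))) :
    r * α * ∫ x in Ioo (0:ℝ) 1, x ^ (-α) * ∫ t in Ioi (0:ℝ), g t / (x + t) = 1 := by
  have hg : IntegrableOn g (Ioi 0) := Integrable.of_integral_ne_zero (by simp [hgprob])
  have hΨ_top : Tendsto (laplaceExponent α) atTop atTop := by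
    have h : Tendsto (fun l => 1 + laplaceExponent α l) atTop atTop :=
      tendsto_atTop_of_rpow_neg_tendsto_zero (p := r + 1) (by positivity) ?_
        ((tendsto_integral_exp_neg_mul_atTop hg).congr' ?_)
    · simpa using tendsto_atTop_add_const_left _ (-1) h
    · filter_upwards [eventually_ge_atTop 0] with l hl
      linarith [laplaceExponent_nonneg hα.le hl]
    · filter_upwards [eventually_gt_atTop 0] with l hl using hLap l hl
  have hFTC := integral_Ioi_one_add_rpow_neg_mul_deriv (s := r) (by positivity)
    (laplaceExponent_zero α) (continuousWithinAt_laplaceExponent_zero hα.le hα1)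
    (fun l hl => laplaceExponent_nonneg hα.le hl.out.le)
    (fun l hl => hasDerivAt_laplaceExponent hα.le hα1 hl)
    (fun l hl => mul_nonneg hα.le (setIntegral_nonneg measurableSet_Ioo fun x hx =>
      mul_nonneg (exp_nonneg _) (rpow_pos_of_pos hx.1 _).le)) hΨ_top
  calc _ = r * ∫ l in Ioi 0, (1 + laplaceExponent α l) ^ (-(r + 1 : ℝ)) *
        (α * ∫ x in Ioo (0:ℝ) 1, exp (-l * x) * x ^ (-α)) := by
        rw [← integral_laplace_mul_laplace (by fun_prop) hgmeas measurableSet_Ioo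
          measurableSet_Ioi (fun _ hx => hx.1) Ioi_subset_Ici_self
          (integrableOn_rpow_neg_Ioo_zero_one hα1) hg (fun x hx => (rpow_pos_of_pos hx.1 _).le)
          hgpos, mul_assoc, ← integral_const_mul]
        congr 1
        refine setIntegral_congr_fun measurableSet_Ioi fun l hl => ?_
        rw [hLap l hl, laplaceExponent]
        ring
    _ = 1 := by
        rw [hFTC]
        field_simp
end

section
/- Let g be a probability density on (0,∞) whose Laplace transform is (1+Ψ(λ))^{-(r+1)}, with Ψ(λ)=∫_0^1(1-e^{-λx})αx^{-α-1}dx, r∈ℕ, 0<α<1. Then r α ∫_0^1 v^{-α} ∫_0^{1/v} t^{-α} g(t(1-v)) dt dv = 1. -/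
/-!
The substitutions `t = x / v` and then `v = x / (x + s)` turn the double integral into
`∫₀¹ x^{-α} ∫₀^∞ g(s) / (x + s) ds dx`. Writing `1 / (x + s) = ∫₀^∞ e^{-λ(x+s)} dλ` and inserting
the Laplace transform of `g`, it becomes `∫₀^∞ h(λ) (1 + Ψ(λ))^{-(r+1)} dλ` with
`h(λ) = ∫₀¹ x^{-α} e^{-λx} dx`. Since `Ψ' = α h`, `Ψ(0) = 0` and `Ψ → ∞`, the function
`r α h (1 + Ψ)^{-(r+1)}` is the derivative of `-(1 + Ψ)^{-r}`, whose total increase on `(0, ∞)`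
is `1`.

The changes of variables and interchanges of integrals are done for `ℝ≥0∞`-valued integrals,
where Tonelli's theorem needs no integrability hypotheses; the finiteness of the result then
justifies the return to the Bochner integral.
-/

open MeasureTheory Set Real Filter Topology
open scoped ENNReal

namespace SizeBiasedDensity

theorem lintegral_ofReal_eq_of_integral_eq {X : Type*} [MeasurableSpace X] {μ : Measure X}
    {f : X → ℝ} (hf : 0 ≤ᵐ[μ] f) {c : ℝ} (hc : c ≠ 0) (h : ∫ x, f x ∂μ = c) :
    ∫⁻ x, ENNReal.ofReal (f x) ∂μ = ENNReal.ofReal c := by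
  have hint : Integrable f μ := by
    by_contra hnot
    exact hc (h ▸ integral_undef hnot)
  rw [← ofReal_integral_eq_lintegral_ofReal hint hf, h]

theorem measurable_setLIntegral_Ioo {F : ℝ → ℝ → ℝ≥0∞} (hF : Measurable (Function.uncurry F))
    {a b : ℝ → ℝ} (ha : Measurable a) (hb : Measurable b) :
    Measurable fun v => ∫⁻ t in Ioo (a v) (b v), F v t := by
  have hS : MeasurableSet {p : ℝ × ℝ | p.2 ∈ Ioo (a p.1) (b p.1)} :=
    (measurableSet_lt (ha.comp measurable_fst) measurable_snd).inter
      (measurableSet_lt measurable_snd (hb.comp measurable_fst))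
  convert (hF.indicator hS).lintegral_prod_right' (ν := volume) using 2 with v
  rw [← lintegral_indicator measurableSet_Ioo]
  rfl

theorem setIntegral_mul_setIntegral_Ioo_eq_toReal {s : Set ℝ} {w : ℝ → ℝ} {h : ℝ → ℝ → ℝ}
    {a b : ℝ → ℝ} (hs : MeasurableSet s) (hw : Measurable w) (hh : Measurable (Function.uncurry h))
    (ha : Measurable a) (hb : Measurable b) (hw0 : ∀ v ∈ s, 0 ≤ w v)
    (hh0 : ∀ v ∈ s, ∀ t ∈ Ioo (a v) (b v), 0 ≤ h v t)
    (hfin : ∫⁻ v in s, ENNReal.ofReal (w v) *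
      ∫⁻ t in Ioo (a v) (b v), ENNReal.ofReal (h v t) ≠ ∞) :
    ∫ v in s, w v * ∫ t in Ioo (a v) (b v), h v t
      = (∫⁻ v in s, ENNReal.ofReal (w v) *
          ∫⁻ t in Ioo (a v) (b v), ENNReal.ofReal (h v t)).toReal := by
  have hmeas : Measurable fun v => ENNReal.ofReal (w v) *
      ∫⁻ t in Ioo (a v) (b v), ENNReal.ofReal (h v t) :=
    hw.ennreal_ofReal.mul <|
      measurable_setLIntegral_Ioo (F := fun v t => ENNReal.ofReal (h v t)) hh.ennreal_ofReal ha hb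
  rw [← integral_toReal hmeas.aemeasurable (ae_lt_top hmeas hfin)]
  refine setIntegral_congr_fun hs fun v hv => ?_
  rw [ENNReal.toReal_mul, ENNReal.toReal_ofReal (hw0 v hv), integral_eq_lintegral_of_nonneg_ae
    ((ae_restrict_iff' measurableSet_Ioo).2 (Eventually.of_forall (hh0 v hv)))
    hh.of_uncurry_left.aestronglyMeasurable]

theorem lintegral_Ioo_mul_right (F : ℝ → ℝ≥0∞) (a b : ℝ) {c : ℝ} (hc : 0 < c) :
    ∫⁻ t in Ioo (a * c) (b * c), F t = ENNReal.ofReal c * ∫⁻ x in Ioo a b, F (x * c) := by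
  rw [← image_mul_right_Ioo a b hc, lintegral_image_eq_lintegral_abs_deriv_mul measurableSet_Ioo
      (fun x _ => (hasDerivAt_mul_const c).hasDerivWithinAt) (mul_left_injective₀ hc.ne').injOn,
    abs_of_pos hc, lintegral_const_mul' _ _ ENNReal.ofReal_ne_top]

theorem lintegral_Ioi_inv_add_mul_eq_lintegral_Ioo (F : ℝ → ℝ≥0∞) {x : ℝ} (hx : 0 < x) :
    ∫⁻ s in Ioi 0, ENNReal.ofReal (x + s)⁻¹ * F s
      = ∫⁻ v in Ioo 0 1, ENNReal.ofReal v⁻¹ * F (x * (1 - v) / v) := by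
  have himage : (fun v => x * (1 - v) / v) '' Ioo 0 1 = Ioi 0 := by
    ext s
    simp only [mem_image, mem_Ioo, mem_Ioi]
    constructor
    · rintro ⟨v, ⟨hv0, hv1⟩, rfl⟩
      exact div_pos (mul_pos hx (by linarith)) hv0
    · intro hs
      refine ⟨x / (x + s), ⟨by positivity, (div_lt_one (by linarith)).2 (by linarith)⟩, ?_⟩
      field_simp
      ring
  have hderiv : ∀ v ∈ Ioo (0 : ℝ) 1,
      HasDerivWithinAt (fun v => x * (1 - v) / v) (-(x / v ^ 2)) (Ioo 0 1) v := by
    intro v hv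
    refine ((((hasDerivAt_id' v).const_sub 1).const_mul x).div (hasDerivAt_id' v)
      hv.1.ne').hasDerivWithinAt.congr_deriv ?_
    field_simp
    ring
  have hinj : InjOn (fun v => x * (1 - v) / v) (Ioo 0 1) := by
    intro a ha b hb hab
    have := ha.1
    have := hb.1
    field_simp at hab
    nlinarith
  rw [← himage, lintegral_image_eq_lintegral_abs_deriv_mul measurableSet_Ioo hderiv hinj]
  refine setLIntegral_congr_fun measurableSet_Ioo fun v hv => ?_
  have hv0 := hv.1
  rw [← mul_assoc, ← ENNReal.ofReal_mul (abs_nonneg _)]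
  congr 2
  rw [abs_neg, abs_of_pos (by positivity)]
  field_simp
  ring

theorem lintegral_exp_neg_mul_Ioi {c : ℝ} (hc : 0 < c) :
    ∫⁻ l in Ioi 0, ENNReal.ofReal (exp (-c * l)) = ENNReal.ofReal c⁻¹ := by
  rw [← ofReal_integral_eq_lintegral_ofReal (exp_neg_integrableOn_Ioi 0 hc)
      (Eventually.of_forall fun _ => (exp_pos _).le),
    integral_exp_mul_Ioi (by linarith) 0]
  congr 1
  field_simp
  simp

theorem lintegral_Ioi_inv_add_mul_eq_lintegral_laplace {F : ℝ → ℝ≥0∞} (hF : Measurable F)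
    {x : ℝ} (hx : 0 ≤ x) :
    ∫⁻ s in Ioi 0, ENNReal.ofReal (x + s)⁻¹ * F s
      = ∫⁻ l in Ioi 0, ENNReal.ofReal (exp (-l * x)) *
          ∫⁻ s in Ioi 0, ENNReal.ofReal (exp (-l * s)) * F s := by
  calc ∫⁻ s in Ioi 0, ENNReal.ofReal (x + s)⁻¹ * F s
      = ∫⁻ s in Ioi 0, ∫⁻ l in Ioi 0,
          ENNReal.ofReal (exp (-l * x)) * (ENNReal.ofReal (exp (-l * s)) * F s) := by
        refine setLIntegral_congr_fun measurableSet_Ioi fun s hs => ?_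
        rw [← lintegral_exp_neg_mul_Ioi (add_pos_of_nonneg_of_pos hx hs),
          ← lintegral_mul_const _ (by fun_prop)]
        refine lintegral_congr fun l => ?_
        rw [← mul_assoc, ← ENNReal.ofReal_mul (exp_pos _).le, ← exp_add]
        ring_nf
    _ = ∫⁻ l in Ioi 0, ∫⁻ s in Ioi 0,
          ENNReal.ofReal (exp (-l * x)) * (ENNReal.ofReal (exp (-l * s)) * F s) :=
        lintegral_lintegral_swap (by fun_prop)
    _ = _ := by
        simp_rw [lintegral_const_mul' _ _ ENNReal.ofReal_ne_top]

theorem lintegral_sizeBiased_eq_lintegral_laplace (α : ℝ) {f : ℝ → ℝ≥0∞} (hf : Measurable f) :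
    ∫⁻ v in Ioo 0 1, ENNReal.ofReal (v ^ (-α)) *
        ∫⁻ t in Ioo 0 (1 / v), ENNReal.ofReal (t ^ (-α)) * f (t * (1 - v))
      = ∫⁻ l in Ioi 0, (∫⁻ x in Ioo 0 1, ENNReal.ofReal (x ^ (-α) * exp (-l * x))) *
          ∫⁻ s in Ioi 0, ENNReal.ofReal (exp (-l * s)) * f s := by
  calc _ = ∫⁻ v in Ioo 0 1, ∫⁻ x in Ioo 0 1,
          ENNReal.ofReal (x ^ (-α)) * (ENNReal.ofReal v⁻¹ * f (x * (1 - v) / v)) := by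
        refine setLIntegral_congr_fun measurableSet_Ioo fun v hv => ?_
        have hscale := lintegral_Ioo_mul_right
          (fun t => ENNReal.ofReal (t ^ (-α)) * f (t * (1 - v))) 0 1 (one_div_pos.2 hv.1)
        rw [zero_mul, one_mul] at hscale
        rw [hscale, ← mul_assoc, ← lintegral_const_mul' _ _ (by finiteness)]
        refine setLIntegral_congr_fun measurableSet_Ioo fun x hx => ?_
        have hv0 := hv.1
        have hvα := rpow_pos_of_pos hv0 (-α)
        rw [show x * (1 / v) * (1 - v) = x * (1 - v) / v by ring, ← mul_assoc, ← mul_assoc,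
          ← ENNReal.ofReal_mul hvα.le, ← ENNReal.ofReal_mul (by positivity),
          ← ENNReal.ofReal_mul (rpow_nonneg hx.1.le _),
          mul_rpow hx.1.le (by positivity), one_div, inv_rpow hv0.le]
        congr 2
        field_simp
    _ = ∫⁻ x in Ioo 0 1, ENNReal.ofReal (x ^ (-α)) *
          ∫⁻ v in Ioo 0 1, ENNReal.ofReal v⁻¹ * f (x * (1 - v) / v) := by
        rw [lintegral_lintegral_swap (by fun_prop)]
        simp_rw [lintegral_const_mul' _ _ ENNReal.ofReal_ne_top]
    _ = ∫⁻ x in Ioo 0 1, ∫⁻ l in Ioi 0, ENNReal.ofReal (x ^ (-α) * exp (-l * x)) *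
          ∫⁻ s in Ioi 0, ENNReal.ofReal (exp (-l * s)) * f s := by
        refine setLIntegral_congr_fun measurableSet_Ioo fun x hx => ?_
        rw [← lintegral_Ioi_inv_add_mul_eq_lintegral_Ioo _ hx.1,
          lintegral_Ioi_inv_add_mul_eq_lintegral_laplace hf hx.1.le,
          ← lintegral_const_mul' _ _ ENNReal.ofReal_ne_top]
        simp_rw [← mul_assoc, ← ENNReal.ofReal_mul (rpow_nonneg hx.1.le _)]
    _ = _ := by
        rw [lintegral_lintegral_swap (by fun_prop)]
        refine lintegral_congr fun l => lintegral_mul_const _ (by fun_prop)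

theorem lintegral_deriv_mul_one_add_rpow_neg {ψ φ : ℝ → ℝ} {r : ℝ} (hr : 0 < r)
    (hψ : ∀ l ∈ Ici 0, HasDerivAt ψ (φ l) l) (hφ : ∀ l ∈ Ioi 0, 0 ≤ φ l) (hψ0 : ψ 0 = 0)
    (hψtop : Tendsto ψ atTop atTop) :
    ENNReal.ofReal r *
      ∫⁻ l in Ioi 0, ENNReal.ofReal (φ l) * ENNReal.ofReal ((1 + ψ l) ^ (-(r + 1))) = 1 := by
  have hmono : MonotoneOn ψ (Ici 0) := by
    refine monotoneOn_of_deriv_nonneg (convex_Ici 0)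
      (fun l hl => (hψ l hl).continuousAt.continuousWithinAt)
      (fun l hl => (hψ l (interior_subset hl)).differentiableAt.differentiableWithinAt)
      fun l hl => ?_
    rw [interior_Ici] at hl
    exact (hψ l (mem_Ici_of_Ioi hl)).deriv ▸ hφ l hl
  have hpos : ∀ l ∈ Ici (0 : ℝ), 0 < 1 + ψ l := fun l hl => by
    linarith [hmono self_mem_Ici hl hl, hψ0]
  have hG : ∀ l ∈ Ici (0 : ℝ), HasDerivAt (fun l => -(1 + ψ l) ^ (-r))
      (r * (φ l * (1 + ψ l) ^ (-(r + 1)))) l := fun l hl => by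
    refine (((hψ l hl).const_add 1).rpow_const (Or.inl (hpos l hl).ne')).neg.congr_deriv ?_
    rw [show -r - 1 = -(r + 1) by ring]
    ring
  have hG' : ∀ l ∈ Ioi (0 : ℝ), 0 ≤ r * (φ l * (1 + ψ l) ^ (-(r + 1))) := fun l hl =>
    mul_nonneg hr.le (mul_nonneg (hφ l hl) (rpow_nonneg (hpos l (mem_Ici_of_Ioi hl)).le _))
  have hGtop : Tendsto (fun l => -(1 + ψ l) ^ (-r)) atTop (𝓝 0) := by
    simpa using ((tendsto_rpow_neg_atTop hr).comp (tendsto_atTop_add_const_left _ 1 hψtop)).neg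
  have hint := integral_Ioi_of_hasDerivAt_of_nonneg' hG hG' hGtop
  rw [hψ0, add_zero, one_rpow, sub_neg_eq_add, zero_add] at hint
  have hlint := ofReal_integral_eq_lintegral_ofReal
    (integrableOn_Ioi_deriv_of_nonneg' hG hG' hGtop)
    ((ae_restrict_iff' measurableSet_Ioi).2 (Eventually.of_forall hG'))
  rw [hint, ENNReal.ofReal_one] at hlint
  rw [← lintegral_const_mul' _ _ ENNReal.ofReal_ne_top, hlint]
  refine setLIntegral_congr_fun measurableSet_Ioi fun l hl => ?_
  rw [← ENNReal.ofReal_mul (hφ l hl), ← ENNReal.ofReal_mul hr.le]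

noncomputable def psi (α l : ℝ) : ℝ :=
  ∫ x in Ioo 0 1, (1 - exp (-l * x)) * (α * x ^ (-α - 1))

theorem integrableOn_rpow_neg_Ioo {α : ℝ} (hα1 : α < 1) :
    IntegrableOn (fun x : ℝ => x ^ (-α)) (Ioo 0 1) :=
  (intervalIntegral.integrableOn_Ioo_rpow_iff zero_lt_one).2 (by linarith)

theorem integrableOn_psi_integrand {α l : ℝ} (hα : 0 ≤ α) (hα1 : α < 1) (hl : 0 ≤ l) :
    IntegrableOn (fun x => (1 - exp (-l * x)) * (α * x ^ (-α - 1))) (Ioo 0 1) := by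
  refine ((integrableOn_rpow_neg_Ioo hα1).const_mul (l * α)).mono' (by fun_prop)
    ((ae_restrict_iff' measurableSet_Ioo).2 (Eventually.of_forall fun x hx => ?_))
  have hx0 : 0 < x := hx.1
  have hexp : exp (-l * x) ≤ 1 := exp_le_one_iff.2 (by nlinarith)
  have hlin : 1 - exp (-l * x) ≤ l * x := by
    have := one_sub_le_exp_neg (l * x)
    rw [← neg_mul] at this
    linarith
  rw [norm_of_nonneg (mul_nonneg (by linarith) (by positivity))]
  calc (1 - exp (-l * x)) * (α * x ^ (-α - 1)) ≤ l * x * (α * x ^ (-α - 1)) := by gcongr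
    _ = l * α * x ^ (-α) := by
      rw [rpow_sub_one hx0.ne']
      field_simp

theorem integrableOn_rpow_neg_mul_exp {α l : ℝ} (hα1 : α < 1) (hl : 0 ≤ l) :
    IntegrableOn (fun x => x ^ (-α) * exp (-l * x)) (Ioo 0 1) :=
  (integrableOn_rpow_neg_Ioo hα1).mul_bdd (by fun_prop)
    ((ae_restrict_iff' measurableSet_Ioo).2 (Eventually.of_forall fun x hx => by
      rw [norm_of_nonneg (exp_pos _).le]
      exact exp_le_one_iff.2 (by nlinarith [hx.1])))

theorem psi_integrand_nonneg {α l x : ℝ} (hα : 0 ≤ α) (hl : 0 ≤ l) (hx : 0 < x) :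
    0 ≤ (1 - exp (-l * x)) * (α * x ^ (-α - 1)) :=
  mul_nonneg (by linarith [exp_le_one_iff.2 (by nlinarith : -l * x ≤ 0)]) (by positivity)

theorem psi_nonneg {α l : ℝ} (hα : 0 ≤ α) (hl : 0 ≤ l) : 0 ≤ psi α l :=
  setIntegral_nonneg measurableSet_Ioo fun _ hx => psi_integrand_nonneg hα hl hx.1

theorem psi_zero (α : ℝ) : psi α 0 = 0 := by
  simp [psi]

theorem hasDerivAt_psi {α l : ℝ} (hα : 0 ≤ α) (hα1 : α < 1) (hl : 0 ≤ l) :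
    HasDerivAt (psi α) (α * ∫ x in Ioo 0 1, x ^ (-α) * exp (-l * x)) l := by
  rw [← integral_const_mul]
  refine (hasDerivAt_integral_of_dominated_loc_of_deriv_le (μ := volume.restrict (Ioo 0 1))
    (F := fun m x => (1 - exp (-m * x)) * (α * x ^ (-α - 1))) (Metric.ball_mem_nhds l one_pos)
    (Eventually.of_forall fun _ => by fun_prop) (integrableOn_psi_integrand hα hα1 hl)
    (F' := fun m x => α * (x ^ (-α) * exp (-m * x))) (bound := fun x => α * exp 1 * x ^ (-α))
    (by fun_prop) ?_ ((integrableOn_rpow_neg_Ioo hα1).const_mul _) ?_).2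
  · refine (ae_restrict_iff' measurableSet_Ioo).2 (Eventually.of_forall fun x hx m hm => ?_)
    have hx0 : 0 < x := hx.1
    have hm' : l - 1 < m := by
      rw [Metric.mem_ball, dist_eq, abs_lt] at hm
      linarith
    have hexp : exp (-m * x) ≤ exp 1 := exp_le_exp.2 (by nlinarith [hx.2])
    rw [norm_of_nonneg (by positivity)]
    calc α * (x ^ (-α) * exp (-m * x)) ≤ α * (x ^ (-α) * exp 1) := by gcongr
      _ = α * exp 1 * x ^ (-α) := by ring
  · refine (ae_restrict_iff' measurableSet_Ioo).2 (Eventually.of_forall fun x hx m _ => ?_)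
    have hd := ((((hasDerivAt_neg m).mul_const x).exp).const_sub 1).mul_const
      (α * x ^ (-α - 1))
    refine hd.congr_deriv ?_
    rw [rpow_sub_one hx.1.ne']
    field_simp [hx.1.ne']

theorem integral_Ioo_mul_rpow_neg_sub_one {α a b : ℝ} (hα : α ≠ 0) (ha : 0 < a) (hab : a ≤ b) :
    ∫ x in Ioo a b, α * x ^ (-α - 1) = a ^ (-α) - b ^ (-α) := by
  rw [← integral_Ioc_eq_integral_Ioo, ← intervalIntegral.integral_of_le hab,
    intervalIntegral.integral_const_mul, integral_rpow (Or.inr ⟨by contrapose! hα; linarith,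
      fun h => by rw [uIcc_of_le hab] at h; linarith [h.1]⟩), sub_add_cancel]
  field_simp
  ring

theorem mul_rpow_sub_one_le_psi {α l : ℝ} (hα : 0 < α) (hα1 : α < 1) (hl : 1 ≤ l) :
    (1 - exp (-1)) * (l ^ α - 1) ≤ psi α l := by
  have hl0 : 0 < l := by linarith
  have hsub : Ioo l⁻¹ 1 ⊆ Ioo 0 1 := Ioo_subset_Ioo_left (by positivity)
  have hint := integrableOn_psi_integrand hα.le hα1 hl0.le
  calc (1 - exp (-1)) * (l ^ α - 1)
      = ∫ x in Ioo l⁻¹ 1, (1 - exp (-1)) * (α * x ^ (-α - 1)) := by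
        rw [integral_const_mul, integral_Ioo_mul_rpow_neg_sub_one hα.ne' (by positivity)
          (inv_le_one_of_one_le₀ hl), inv_rpow hl0.le, rpow_neg hl0.le, inv_inv, one_rpow]
    _ ≤ ∫ x in Ioo l⁻¹ 1, (1 - exp (-l * x)) * (α * x ^ (-α - 1)) := by
        refine setIntegral_mono_on ?_ (hint.mono_set hsub) measurableSet_Ioo fun x hx => ?_
        · have hcont : ContinuousOn (fun x : ℝ => x ^ (-α - 1)) (Icc l⁻¹ 1) := fun x hx =>
            (continuousAt_rpow_const _ _
              (Or.inl ((inv_pos.2 hl0).trans_le hx.1).ne')).continuousWithinAt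
          exact ((hcont.integrableOn_Icc.mono_set Ioo_subset_Icc_self).const_mul α).const_mul _
        · have hx0 : 0 < x := (inv_pos.2 hl0).trans hx.1
          have : 1 ≤ l * x := by
            have := (inv_lt_iff_one_lt_mul₀' hl0).1 hx.1
            linarith
          gcongr
          nlinarith
    _ ≤ psi α l := by
        refine setIntegral_mono_set hint ?_ (Eventually.of_forall hsub)
        exact (ae_restrict_iff' measurableSet_Ioo).2
          (Eventually.of_forall fun x hx => psi_integrand_nonneg hα.le hl0.le hx.1)

theorem tendsto_psi_atTop {α : ℝ} (hα : 0 < α) (hα1 : α < 1) :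
    Tendsto (psi α) atTop atTop := by
  refine tendsto_atTop_mono' _
    ((eventually_ge_atTop 1).mono fun l hl => mul_rpow_sub_one_le_psi hα hα1 hl) ?_
  refine Tendsto.const_mul_atTop (by linarith [exp_lt_one_iff.2 neg_one_lt_zero]) ?_
  exact tendsto_atTop_add_const_right _ _ (tendsto_rpow_atTop hα)

theorem lintegral_psi_normalization {α r : ℝ} (hα : 0 < α) (hα1 : α < 1) (hr : 0 < r) :
    ENNReal.ofReal r * (ENNReal.ofReal α * ∫⁻ l in Ioi 0,
      (∫⁻ x in Ioo 0 1, ENNReal.ofReal (x ^ (-α) * exp (-l * x))) *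
        ENNReal.ofReal ((1 + psi α l) ^ (-(r + 1)))) = 1 := by
  rw [← lintegral_const_mul' _ _ ENNReal.ofReal_ne_top]
  convert lintegral_deriv_mul_one_add_rpow_neg hr (fun l hl => hasDerivAt_psi hα.le hα1 hl)
    (fun l _ => mul_nonneg hα.le (setIntegral_nonneg measurableSet_Ioo fun x hx =>
      mul_nonneg (rpow_nonneg hx.1.le _) (exp_pos _).le))
    (psi_zero α) (tendsto_psi_atTop hα hα1) using 2
  refine setLIntegral_congr_fun measurableSet_Ioi fun l hl => ?_
  rw [← ofReal_integral_eq_lintegral_ofReal (integrableOn_rpow_neg_mul_exp hα1 (le_of_lt hl))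
      ((ae_restrict_iff' measurableSet_Ioo).2
        (Eventually.of_forall fun x hx => mul_nonneg (rpow_nonneg hx.1.le _) (exp_pos _).le)),
    ENNReal.ofReal_mul hα.le, mul_assoc]

end SizeBiasedDensity

open SizeBiasedDensity

theorem stmt_15_general (α : ℝ) (hα : 0 < α) (hα1 : α < 1) (r : ℕ) (hr : 0 < r)
    (g : ℝ → ℝ) (hgpos : ∀ t ∈ Ioi (0:ℝ), 0 ≤ g t) (hgmeas : Measurable g)
    (hLap : ∀ l > (0:ℝ),
      ∫ t in Ioi (0:ℝ), Real.exp (-l * t) * g t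
        = (1 + ∫ x in Ioo (0:ℝ) 1, (1 - Real.exp (-l * x)) * (α * x ^ (-α - 1)))
            ^ (-(r + 1 : ℝ))) :
    r * α * ∫ v in Ioo (0:ℝ) 1, v ^ (-α) *
        ∫ t in Ioo (0:ℝ) (1 / v), t ^ (-α) * g (t * (1 - v)) = 1 := by
  have hlaplace : ∀ l ∈ Ioi (0:ℝ),
      ∫⁻ s in Ioi 0, ENNReal.ofReal (exp (-l * s)) * ENNReal.ofReal (g s)
        = ENNReal.ofReal ((1 + psi α l) ^ (-((r:ℝ) + 1))) := fun l hl => by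
    simp_rw [← ENNReal.ofReal_mul (exp_pos _).le]
    refine lintegral_ofReal_eq_of_integral_eq ((ae_restrict_iff' measurableSet_Ioi).2
      (Eventually.of_forall fun s hs => mul_nonneg (exp_pos _).le (hgpos s hs)))
      (rpow_pos_of_pos ?_ _).ne' (hLap l hl)
    linarith [psi_nonneg hα.le (le_of_lt hl)]
  set A := ∫⁻ v in Ioo 0 1, ENNReal.ofReal (v ^ (-α)) *
    ∫⁻ t in Ioo 0 (1 / v), ENNReal.ofReal (t ^ (-α) * g (t * (1 - v)))
  have hA : ENNReal.ofReal r * (ENNReal.ofReal α * A) = 1 := by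
    rw [← lintegral_psi_normalization hα hα1 (Nat.cast_pos.2 hr),
      ← setLIntegral_congr_fun measurableSet_Ioi fun l hl => congrArg _ (hlaplace l hl),
      ← lintegral_sizeBiased_eq_lintegral_laplace α hgmeas.ennreal_ofReal]
    refine congrArg _ (congrArg _ (setLIntegral_congr_fun measurableSet_Ioo fun v _ =>
      congrArg _ (setLIntegral_congr_fun measurableSet_Ioo fun t ht => ?_)))
    exact ENNReal.ofReal_mul (rpow_nonneg ht.1.le _)
  have hfin : A ≠ ∞ := fun h => by
    simp [h, hα, hr.ne'] at hA
  rw [setIntegral_mul_setIntegral_Ioo_eq_toReal measurableSet_Ioo (by fun_prop) (by fun_prop)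
    measurable_const (by fun_prop) (fun v hv => rpow_nonneg hv.1.le _)
    (fun v hv t ht => mul_nonneg (rpow_nonneg ht.1.le _)
      (hgpos _ (mul_pos ht.1 (by linarith [hv.2])))) hfin]
  have h := congrArg ENNReal.toReal hA
  rwa [ENNReal.toReal_mul, ENNReal.toReal_mul, ENNReal.toReal_ofReal (Nat.cast_nonneg r),
    ENNReal.toReal_ofReal hα.le, ENNReal.toReal_one, ← mul_assoc] at h

/-- Normalisation of the size-biased joint density (n=1):
rα ∫_0^1 v^{-α} ∫_0^{1/v} t^{-α} g(t(1-v)) dt dv = 1. -/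
theorem stmt_15 (α : ℝ) (hα : 0 < α) (hα1 : α < 1) (r : ℕ) (hr : 0 < r)
    (g : ℝ → ℝ) (hgpos : ∀ t ∈ Ioi (0:ℝ), 0 ≤ g t) (hgmeas : Measurable g)
    (hgprob : ∫ t in Ioi (0:ℝ), g t = 1)
    (hLap : ∀ l > (0:ℝ),
      ∫ t in Ioi (0:ℝ), Real.exp (-l * t) * g t
        = (1 + ∫ x in Ioo (0:ℝ) 1, (1 - Real.exp (-l * x)) * (α * x ^ (-α - 1)))
            ^ (-(r + 1 : ℝ))) :
    r * α * ∫ v in Ioo (0:ℝ) 1, v ^ (-α) *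
        ∫ t in Ioo (0:ℝ) (1 / v), t ^ (-α) * g (t * (1 - v)) = 1 :=
  stmt_15_general α hα hα1 r hr g hgpos hgmeas hLap
end
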